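/- arXiv:2111.07966 — 3 statements merged into one kernel-verified Lean document; each statement's English description precedes it below -/
import Mathlib

section
/- Let X be a random variable taking values in a measurable space, let τ(X) be a bounded random variable, let Q = S(X) where S is measurable, and suppose F_S, the CDF of Q, is continuous (so F_S(Q) is uniform on [0,1]). Let α : (0,1] → ℝ be such that α is integrable on (0,1) and α(u)/u is integrable on (t,1) for each t ∈ (0,1). Then ∫₀¹ α(u) · ( E[τ(X) · 1{F_S(Q) ≥ 1−u}]/u − E[τ(X)] ) du = E[ w_α(1 − F_S(Q)) · τ(X) ], where w_α(t) = ∫_t^1 α(u)/u du − ∫₀¹ α(u) du. -/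
open MeasureTheory Real intervalIntegral Filter

lemma cdf_tail_bound {Ω : Type*} [MeasurableSpace Ω] (μ : Measure Ω) [IsProbabilityMeasure μ]
    (Q : Ω → ℝ) (hQ : Measurable Q) (F : ℝ → ℝ)
    (hF : F = fun q => (μ {ω | Q ω ≤ q}).toReal) (hFcont : Continuous F)
    (t : ℝ) (ht : 0 < t) :
    μ {ω | t ≤ F (Q ω)} ≤ ENNReal.ofReal (1 - t) := by
  have hmono : Monotone F := by
    intro a b hab
    simp only [hF]
    exact ENNReal.toReal_mono (measure_ne_top _ _)
      (measure_mono fun ω (h : Q ω ≤ a) => h.trans hab)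
  -- F tends to 0 at -infinity (along -n)
  have htail : Tendsto (fun n : ℕ => μ {ω | Q ω ≤ -(n : ℝ)}) atTop (nhds 0) := by
    have h0 : (⋂ n : ℕ, {ω | Q ω ≤ -(n : ℝ)}) = ∅ := by
      ext ω
      simp only [Set.mem_iInter, Set.mem_setOf_eq, Set.mem_empty_iff_false, iff_false, not_forall]
      obtain ⟨n, hn⟩ := exists_nat_gt (-(Q ω))
      exact ⟨n, by push_neg; linarith⟩
    have := MeasureTheory.tendsto_measure_iInter_atTop (μ := μ)
      (s := fun n : ℕ => {ω | Q ω ≤ -(n : ℝ)})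
      (fun n => (measurableSet_le hQ measurable_const).nullMeasurableSet)
      (fun a b hab => by
        intro ω hω
        simp only [Set.mem_setOf_eq] at *
        have : -(b:ℝ) ≤ -(a:ℝ) := by exact_mod_cast neg_le_neg (Nat.cast_le.mpr hab)
        linarith)
      ⟨0, measure_ne_top _ _⟩
    rwa [h0, measure_empty] at this
  -- exists q0 with F q0 < t
  obtain ⟨q0, hq0⟩ : ∃ q0 : ℝ, F q0 < t := by
    have h2 := (ENNReal.tendsto_nhds_zero.mp htail) (ENNReal.ofReal (t/2))
      (by simp; positivity)
    obtain ⟨n, hn⟩ := h2.exists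
    refine ⟨-(n:ℝ), ?_⟩
    have hlt : μ {ω | Q ω ≤ -(n:ℝ)} < ENNReal.ofReal t :=
      lt_of_le_of_lt hn (by
        apply ENNReal.ofReal_lt_ofReal_iff ht |>.mpr
        linarith)
    rw [hF]
    exact (ENNReal.lt_ofReal_iff_toReal_lt (measure_ne_top _ _)).mp hlt
  set B : Set ℝ := {q | t ≤ F q} with hB
  by_cases hBne : B.Nonempty
  · have hBclosed : IsClosed B := isClosed_le continuous_const hFcont
    have hBbdd : BddBelow B := ⟨q0, fun q hq => by
      by_contra hc
      push_neg at hc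
      exact absurd (hmono hc.le) (by simp only [hB, Set.mem_setOf_eq] at hq; linarith)⟩
    set a := sInf B with ha
    have haB : a ∈ B := hBclosed.csInf_mem hBne hBbdd
    have haF : t ≤ F a := haB
    -- μ {Q < a} = ofReal (F a)
    have hlt_eq : μ {ω | Q ω < a} = ENNReal.ofReal (F a) := by
      have hunion : {ω | Q ω < a} = ⋃ n : ℕ, {ω | Q ω ≤ a - 1/(n+1)} := by
        ext ω
        simp only [Set.mem_iUnion, Set.mem_setOf_eq]
        constructor
        · intro h
          obtain ⟨n, hn⟩ := exists_nat_one_div_lt (sub_pos.mpr h)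
          exact ⟨n, by linarith⟩
        · rintro ⟨n, hn⟩
          have : (0:ℝ) < 1/(n+1) := by positivity
          linarith
      have hmon : Monotone (fun n : ℕ => {ω | Q ω ≤ a - 1/((n:ℝ)+1)}) := by
        intro m n hmn ω hω
        simp only [Set.mem_setOf_eq] at *
        have h1 : 1/((n:ℝ)+1) ≤ 1/((m:ℝ)+1) := by
          apply one_div_le_one_div_of_le (by positivity)
          have := (Nat.cast_le (α := ℝ)).mpr hmn; linarith
        linarith
      have hmeas := MeasureTheory.tendsto_measure_iUnion_atTop (μ := μ) hmon
      rw [← hunion] at hmeas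
      have hFlim : Tendsto (fun n : ℕ => μ {ω | Q ω ≤ a - 1/((n:ℝ)+1)}) atTop
          (nhds (ENNReal.ofReal (F a))) := by
        have h1 : Tendsto (fun n : ℕ => a - 1/((n:ℝ)+1)) atTop (nhds a) := by
          have := tendsto_one_div_add_atTop_nhds_zero_nat (𝕜 := ℝ)
          have h2 := (tendsto_const_nhds (x := a) (f := atTop (α := ℕ))).sub this
          simpa using h2
        have h3 : Tendsto (fun n : ℕ => F (a - 1/((n:ℝ)+1))) atTop (nhds (F a)) :=
          (hFcont.tendsto a).comp h1
        have h4 : Tendsto (fun n : ℕ => ENNReal.ofReal (F (a - 1/((n:ℝ)+1)))) atTop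
            (nhds (ENNReal.ofReal (F a))) := (ENNReal.continuous_ofReal.tendsto _).comp h3
        convert h4 using 2 with n
        rw [hF]
        exact (ENNReal.ofReal_toReal (measure_ne_top _ _)).symm
      exact tendsto_nhds_unique hmeas hFlim
    have hsub : {ω | t ≤ F (Q ω)} ⊆ {ω | a ≤ Q ω} := by
      intro ω hω
      exact csInf_le hBbdd hω
    calc μ {ω | t ≤ F (Q ω)} ≤ μ {ω | a ≤ Q ω} := measure_mono hsub
      _ = μ {ω | Q ω < a}ᶜ := by congr 1; ext ω; simp [not_lt]
      _ = 1 - μ {ω | Q ω < a} := by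
          rw [measure_compl (measurableSet_lt hQ measurable_const) (measure_ne_top _ _),
            measure_univ]
      _ ≤ 1 - ENNReal.ofReal t := by
          rw [hlt_eq]
          exact tsub_le_tsub_left (ENNReal.ofReal_le_ofReal haF) 1
      _ = ENNReal.ofReal (1 - t) := by
          rw [ENNReal.ofReal_sub 1 ht.le, ENNReal.ofReal_one]
  · have : {ω | t ≤ F (Q ω)} = ∅ := by
      ext ω
      simp only [Set.mem_setOf_eq, Set.mem_empty_iff_false, iff_false]
      intro h
      exact hBne ⟨Q ω, h⟩
    simp [this]

/-- Weighted-ATE representation of the RATE (Proposition 1): with `Q = S(X)`, `F` the CDF of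
`Q` assumed continuous, `τ` bounded, and suitable integrability of the weight `α`, the
α-weighted integral of the TOC equals `E[w_α(1 − F(Q)) τ(X)]`. -/
theorem rate_weighted_ate_representation
    {Ω 𝒳 : Type*} [MeasurableSpace Ω] [MeasurableSpace 𝒳]
    (μ : Measure Ω) [IsProbabilityMeasure μ]
    (X : Ω → 𝒳) (S : 𝒳 → ℝ) (τ : 𝒳 → ℝ)
    (hX : Measurable X) (hS : Measurable S) (hτ : Measurable τ)
    (C : ℝ) (hbdd : ∀ x, |τ x| ≤ C)
    (F : ℝ → ℝ) (hF : F = fun q => (μ {ω | S (X ω) ≤ q}).toReal)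
    (hFcont : Continuous F)
    (α : ℝ → ℝ)
    (hα : IntervalIntegrable α volume 0 1)
    (hαu : ∀ t ∈ Set.Ioo (0 : ℝ) 1, IntervalIntegrable (fun u => α u / u) volume t 1) :
    (∫ u in (0 : ℝ)..1, α u *
        ((∫ ω, τ (X ω) * (if 1 - u ≤ F (S (X ω)) then 1 else 0) ∂μ) / u
          - ∫ ω, τ (X ω) ∂μ)) =
      ∫ ω, ((∫ v in (1 - F (S (X ω)))..(1 : ℝ), α v / v)
              - ∫ v in (0 : ℝ)..1, α v) * τ (X ω) ∂μ := by
  have hΩ : Nonempty Ω := by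
    by_contra h
    rw [not_nonempty_iff] at h
    have h1 := measure_univ (μ := μ)
    rw [Set.univ_eq_empty_iff.mpr h, measure_empty] at h1
    exact zero_ne_one h1
  obtain ⟨ω₀⟩ := hΩ
  have hC : 0 ≤ C := le_trans (abs_nonneg _) (hbdd (X ω₀))
  set G : Ω → ℝ := fun ω => F (S (X ω)) with hGdef
  have hGmeas : Measurable G := hFcont.measurable.comp (hS.comp hX)
  have hG0 : ∀ ω, 0 ≤ G ω := fun ω => by
    simp only [hGdef, hF]; exact ENNReal.toReal_nonneg
  have hG1 : ∀ ω, G ω ≤ 1 := fun ω => by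
    simp only [hGdef, hF]
    exact ENNReal.toReal_le_of_le_ofReal one_pos.le (by simpa using prob_le_one)
  have key : ∀ t : ℝ, 0 < t → μ {ω | t ≤ G ω} ≤ ENNReal.ofReal (1 - t) := fun t ht =>
    cdf_tail_bound μ (fun ω => S (X ω)) (hS.comp hX) F hF hFcont t ht
  have keyU : ∀ u ∈ Set.Ioc (0:ℝ) 1, μ {ω | 1 - u ≤ G ω} ≤ ENNReal.ofReal u := by
    intro u hu
    rcases lt_or_eq_of_le hu.2 with h1 | h1
    · have := key (1 - u) (by linarith)
      simpa using this
    · subst h1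
      calc μ {ω | 1 - 1 ≤ G ω} ≤ 1 := prob_le_one
        _ = ENNReal.ofReal 1 := by simp
  have aeG : ∀ᵐ ω ∂μ, G ω < 1 := by
    rw [ae_iff]
    simp only [not_lt]
    exact le_antisymm (le_trans (key 1 one_pos) (by simp)) zero_le
  have hτX : Integrable (fun ω => τ (X ω)) μ := by
    apply Integrable.mono' (integrable_const C) ((hτ.comp hX).aestronglyMeasurable)
    exact ae_of_all _ fun ω => by simpa [Real.norm_eq_abs] using hbdd (X ω)
  set M : ℝ := ∫ ω, τ (X ω) ∂μ with hM
  -- measurable representative of α on (0,1]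
  have hαIoc : IntegrableOn α (Set.Ioc 0 1) volume := hα.1
  obtain ⟨β, hβsm, hβae⟩ : ∃ β : ℝ → ℝ, StronglyMeasurable β ∧
      α =ᵐ[volume.restrict (Set.Ioc 0 1)] β :=
    ⟨hαIoc.aestronglyMeasurable.mk α, hαIoc.aestronglyMeasurable.stronglyMeasurable_mk,
      hαIoc.aestronglyMeasurable.ae_eq_mk⟩
  have hβmeas : Measurable β := hβsm.measurable
  have hβint : IntegrableOn β (Set.Ioc 0 1) volume := hαIoc.congr hβae
  set ρ : Measure ℝ := volume.restrict (Set.Ioc (0:ℝ) 1) with hρ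
  set g : ℝ → Ω → ℝ := fun u ω => (β u / u) * (τ (X ω) * (if 1 - u ≤ G ω then 1 else 0))
    with hg
  have hgm : StronglyMeasurable (Function.uncurry g) := by
    apply Measurable.stronglyMeasurable
    apply Measurable.mul
    · exact (hβmeas.comp measurable_fst).div measurable_fst
    · apply Measurable.mul (((hτ.comp hX).comp measurable_snd))
      exact Measurable.ite
        (measurableSet_le (measurable_const.sub measurable_fst) (hGmeas.comp measurable_snd))
        measurable_const measurable_const
  have hτite : ∀ u ω, |τ (X ω) * (if 1 - u ≤ G ω then 1 else 0)| ≤ C := by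
    intro u ω
    split_ifs
    · simpa using hbdd (X ω)
    · simpa using hC
  have hIτ : ∀ u : ℝ, Integrable (fun ω => g u ω) μ := by
    intro u
    apply Integrable.mono' (integrable_const (|β u / u| * C))
    · exact (measurable_const.mul ((hτ.comp hX).mul
        (Measurable.ite (measurableSet_le measurable_const hGmeas) measurable_const
          measurable_const))).aestronglyMeasurable
    · refine ae_of_all _ fun ω => ?_
      have : ‖g u ω‖ = |β u / u| * |τ (X ω) * (if 1 - u ≤ G ω then 1 else 0)| := by
        rw [hg, Real.norm_eq_abs, abs_mul]
      rw [this]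
      exact mul_le_mul_of_nonneg_left (hτite u ω) (abs_nonneg _)
  have hInorm : ∀ u ∈ Set.Ioc (0:ℝ) 1, (∫ ω, ‖g u ω‖ ∂μ) ≤ C * |β u| := by
    intro u hu
    have hnorm : ∀ ω, ‖g u ω‖ = |β u / u| * |τ (X ω) * (if 1 - u ≤ G ω then 1 else 0)| := by
      intro ω; rw [hg, Real.norm_eq_abs, abs_mul]
    have step1 : (∫ ω, ‖g u ω‖ ∂μ)
        = |β u / u| * ∫ ω, |τ (X ω) * (if 1 - u ≤ G ω then 1 else 0)| ∂μ := by
      simp_rw [hnorm]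
      exact integral_const_mul _ _
    have hind : ∀ ω, |τ (X ω) * (if 1 - u ≤ G ω then 1 else 0)|
        = Set.indicator {ω | 1 - u ≤ G ω} (fun ω => |τ (X ω)|) ω := by
      intro ω
      simp only [Set.indicator_apply, Set.mem_setOf_eq]
      split_ifs <;> simp [abs_mul]
    have hmeasA : MeasurableSet {ω | 1 - u ≤ G ω} := measurableSet_le measurable_const hGmeas
    have step2 : (∫ ω, |τ (X ω) * (if 1 - u ≤ G ω then 1 else 0)| ∂μ) ≤ C * u := by
      rw [show (fun ω => |τ (X ω) * (if 1 - u ≤ G ω then 1 else 0)|)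
          = Set.indicator {ω | 1 - u ≤ G ω} (fun ω => |τ (X ω)|) from funext hind]
      rw [MeasureTheory.integral_indicator hmeasA]
      have h3 : ‖∫ ω in {ω | 1 - u ≤ G ω}, |τ (X ω)| ∂μ‖
          ≤ C * (μ {ω | 1 - u ≤ G ω}).toReal := by
        apply norm_setIntegral_le_of_norm_le_const (measure_lt_top _ _)
        · intro ω _; simpa [Real.norm_eq_abs, abs_abs] using hbdd (X ω)
      have h4 : (μ {ω | 1 - u ≤ G ω}).toReal ≤ u := by
        have := ENNReal.toReal_mono ENNReal.ofReal_ne_top (keyU u hu)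
        rwa [ENNReal.toReal_ofReal hu.1.le] at this
      calc (∫ ω in {ω | 1 - u ≤ G ω}, |τ (X ω)| ∂μ)
          ≤ ‖∫ ω in {ω | 1 - u ≤ G ω}, |τ (X ω)| ∂μ‖ := le_abs_self _
        _ ≤ C * (μ {ω | 1 - u ≤ G ω}).toReal := h3
        _ ≤ C * u := mul_le_mul_of_nonneg_left h4 hC
    calc (∫ ω, ‖g u ω‖ ∂μ)
        = |β u / u| * ∫ ω, |τ (X ω) * (if 1 - u ≤ G ω then 1 else 0)| ∂μ := step1
      _ ≤ |β u / u| * (C * u) := mul_le_mul_of_nonneg_left step2 (abs_nonneg _)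
      _ = C * |β u| := by
          rw [abs_div, abs_of_pos hu.1]
          field_simp
          rw [mul_right_comm, mul_div_cancel_right₀ _ hu.1.ne']
  have hg_int : Integrable (Function.uncurry g) (ρ.prod μ) := by
    rw [MeasureTheory.integrable_prod_iff hgm.aestronglyMeasurable]
    refine ⟨ae_of_all _ hIτ, ?_⟩
    apply Integrable.mono' ((hβint.abs).const_mul C)
    · exact (StronglyMeasurable.integral_prod_right
        (f := fun u ω => ‖g u ω‖) hgm.norm).aestronglyMeasurable
    · filter_upwards [ae_restrict_mem measurableSet_Ioc] with u hu
      rw [Real.norm_eq_abs, abs_of_nonneg (integral_nonneg fun ω => norm_nonneg _)]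
      exact hInorm u hu
  have hswap := MeasureTheory.integral_integral_swap hg_int
  set c : ℝ := ∫ v in (0:ℝ)..1, α v with hc
  set I : ℝ → ℝ := fun u => ∫ ω, τ (X ω) * (if 1 - u ≤ G ω then 1 else 0) ∂μ with hI
  set w : Ω → ℝ := fun ω => ∫ v in (1 - G ω)..(1:ℝ), α v / v with hw
  have h_inner : ∀ u, (∫ ω, g u ω ∂μ) = (β u / u) * I u := fun u => integral_const_mul _ _
  have hL1 : (∫ u in (0:ℝ)..1, α u * (I u / u - M)) = ∫ u, ((β u / u) * I u - β u * M) ∂ρ := by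
    rw [integral_of_le zero_le_one]
    apply MeasureTheory.integral_congr_ae
    filter_upwards [ae_restrict_mem measurableSet_Ioc, hβae] with u hu hub
    rw [← hub]
    have hu0 : u ≠ 0 := ne_of_gt hu.1
    field_simp
  have h1 : Integrable (fun u => (β u / u) * I u) ρ :=
    (hg_int.integral_prod_left).congr (ae_of_all _ fun u => h_inner u)
  have h2 : Integrable (fun u => β u * M) ρ := hβint.mul_const M
  have hβα : (∫ u, β u ∂ρ) = c := by
    rw [hc, integral_of_le zero_le_one]
    exact (MeasureTheory.integral_congr_ae hβae).symm
  have hL2 : (∫ u, ((β u / u) * I u - β u * M) ∂ρ)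
      = (∫ u, (β u / u) * I u ∂ρ) - c * M := by
    rw [integral_sub h1 h2, MeasureTheory.integral_mul_const, hβα]
  have hL3 : (∫ u, (β u / u) * I u ∂ρ) = ∫ ω, ∫ u, g u ω ∂ρ ∂μ := by
    rw [← hswap]
    exact MeasureTheory.integral_congr_ae (ae_of_all _ fun u => (h_inner u).symm)
  have h_eval : ∀ᵐ ω ∂μ, (∫ u, g u ω ∂ρ) = τ (X ω) * w ω := by
    filter_upwards [aeG] with ω hω
    have hU0 : 0 < 1 - G ω := by linarith
    have hU1 : 1 - G ω ≤ 1 := by linarith [hG0 ω]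
    have hrw : ∀ u, g u ω = τ (X ω) * ((Set.Ici (1 - G ω)).indicator (fun v => β v / v) u) := by
      intro u
      rw [hg]
      simp only [Set.indicator_apply, Set.mem_Ici]
      have heq : (1 - u ≤ G ω) = (1 - G ω ≤ u) := by
        apply propext; constructor <;> intro <;> linarith
      simp only [heq]
      split_ifs <;> ring
    calc (∫ u, g u ω ∂ρ)
        = ∫ u, τ (X ω) * ((Set.Ici (1 - G ω)).indicator (fun v => β v / v) u) ∂ρ :=
          MeasureTheory.integral_congr_ae (ae_of_all _ hrw)
      _ = τ (X ω) * ∫ u, (Set.Ici (1 - G ω)).indicator (fun v => β v / v) u ∂ρ :=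
          integral_const_mul _ _
      _ = τ (X ω) * w ω := by
          congr 1
          rw [hρ, MeasureTheory.setIntegral_indicator measurableSet_Ici]
          have hset : Set.Ioc (0:ℝ) 1 ∩ Set.Ici (1 - G ω) = Set.Icc (1 - G ω) 1 := by
            ext v
            simp only [Set.mem_inter_iff, Set.mem_Ioc, Set.mem_Ici, Set.mem_Icc]
            constructor
            · rintro ⟨⟨h1, h2⟩, h3⟩; exact ⟨h3, h2⟩
            · rintro ⟨h1, h2⟩; exact ⟨⟨by linarith, h2⟩, h1⟩
          rw [hset, MeasureTheory.integral_Icc_eq_integral_Ioc]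
          have hβα2 : (∫ v in Set.Ioc (1 - G ω) 1, β v / v ∂volume)
              = ∫ v in Set.Ioc (1 - G ω) 1, α v / v ∂volume := by
            apply MeasureTheory.integral_congr_ae
            have hres := ae_restrict_of_ae_restrict_of_subset
              (Set.Ioc_subset_Ioc_left hU0.le) hβae
            filter_upwards [hres] with v hv
            rw [hv]
          rw [hβα2]
          exact (integral_of_le hU1).symm
  have hR1 : Integrable (fun ω => τ (X ω) * w ω) μ :=
    (hg_int.integral_prod_right).congr h_eval
  have hR : (∫ ω, (w ω - c) * τ (X ω) ∂μ) = (∫ ω, τ (X ω) * w ω ∂μ) - c * M := by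
    have hpt : ∀ ω, (w ω - c) * τ (X ω) = τ (X ω) * w ω - c * τ (X ω) := fun ω => by ring
    simp_rw [hpt]
    rw [integral_sub hR1 (hτX.const_mul c), MeasureTheory.integral_const_mul]
  show (∫ u in (0:ℝ)..1, α u * (I u / u - M)) = ∫ ω, (w ω - c) * τ (X ω) ∂μ
  rw [hL1, hL2, hL3, MeasureTheory.integral_congr_ae h_eval, hR]
end

section
/- Let Q be a real random variable with continuous CDF F, and let f(q) = E[D | Q = q] for an integrable random variable D, with f nondecreasing in q. Then u ↦ TOC(u) := E[D | F(Q) ≥ 1−u] − E[D] is nonnegative and nonincreasing on (0,1], and for any nonnegative integrable weight α, ∫₀¹ α(u) TOC(u) du ≥ 0. -/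
open MeasureTheory ProbabilityTheory Real intervalIntegral Set Filter Topology

lemma toc_level_set {Ω : Type*} [MeasurableSpace Ω]
    (μ : Measure Ω) [IsProbabilityMeasure μ]
    (Q : Ω → ℝ) (hQ : Measurable Q) (F : ℝ → ℝ)
    (hF : F = fun q => (μ {ω | Q ω ≤ q}).toReal) (hFcont : Continuous F)
    {t : ℝ} (ht0 : 0 < t) (ht1 : t < 1) :
    ∃ a : ℝ, F a = t ∧ {ω | t ≤ F (Q ω)} = Q ⁻¹' (Set.Ici a) ∧
      μ {ω | t ≤ F (Q ω)} = ENNReal.ofReal (1 - t) := by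
  have hFiic : ∀ q, F q = (μ (Q ⁻¹' Set.Iic q)).toReal := by
    intro q; rw [hF]; rfl
  have hFmono : Monotone F := by
    intro q q' h
    simp only [hFiic]
    exact ENNReal.toReal_mono (measure_ne_top μ _)
      (measure_mono (preimage_mono (Iic_subset_Iic.mpr h)))
  have hmap : IsProbabilityMeasure (μ.map Q) := Measure.isProbabilityMeasure_map hQ.aemeasurable
  have hFc : F = cdf (μ.map Q) := by
    funext q
    rw [hFiic, cdf_eq_real, measureReal_def, Measure.map_apply hQ measurableSet_Iic]
  have htop : Tendsto F atTop (𝓝 1) := hFc ▸ tendsto_cdf_atTop (μ.map Q)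
  have hbot : Tendsto F atBot (𝓝 0) := hFc ▸ tendsto_cdf_atBot (μ.map Q)
  obtain ⟨x₁, hx₁⟩ : ∃ x, F x < t := (hbot.eventually_lt_const ht0).exists
  obtain ⟨x₂, hx₂⟩ : ∃ x, t < F x := (htop.eventually_const_lt ht1).exists
  obtain ⟨c, hc⟩ : t ∈ range F := intermediate_value_univ x₁ x₂ hFcont ⟨hx₁.le, hx₂.le⟩
  set S : Set ℝ := {q | t ≤ F q} with hS
  have hcS : c ∈ S := by simp [hS, hc]
  have hbdd : BddBelow S := by
    refine ⟨x₁, fun q hq => ?_⟩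
    by_contra h
    push_neg at h
    exact absurd (hq.trans (hFmono h.le)) hx₁.not_ge
  have hclosed : IsClosed S := isClosed_le continuous_const hFcont
  set a := sInf S with ha
  have haS : a ∈ S := hclosed.csInf_mem ⟨c, hcS⟩ hbdd
  have hFa : F a = t := le_antisymm (by simpa [hc] using hFmono (csInf_le hbdd hcS)) haS
  have hsetEq : {ω | t ≤ F (Q ω)} = Q ⁻¹' (Set.Ici a) := by
    ext ω
    simp only [mem_setOf_eq, mem_preimage, mem_Ici]
    exact ⟨fun h => csInf_le hbdd h, fun h => hFa ▸ hFmono h⟩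
  refine ⟨a, hFa, hsetEq, ?_⟩
  have hatom : μ (Q ⁻¹' {a}) = 0 := by
    have key : ∀ b < a, (μ (Q ⁻¹' {a})).toReal ≤ F a - F b := by
      intro b hb
      have hsub : Q ⁻¹' {a} ⊆ Q ⁻¹' Set.Iic a \ Q ⁻¹' Set.Iic b := by
        intro ω hω
        have : Q ω = a := hω
        exact ⟨by simp [this], by simp [this, hb.not_ge]⟩
      have hdiff : μ (Q ⁻¹' Set.Iic a \ Q ⁻¹' Set.Iic b)
          = μ (Q ⁻¹' Set.Iic a) - μ (Q ⁻¹' Set.Iic b) :=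
        measure_diff (preimage_mono (Iic_subset_Iic.mpr hb.le))
          (hQ measurableSet_Iic).nullMeasurableSet (measure_ne_top μ _)
      calc (μ (Q ⁻¹' {a})).toReal
          ≤ (μ (Q ⁻¹' Set.Iic a \ Q ⁻¹' Set.Iic b)).toReal :=
            ENNReal.toReal_mono (measure_ne_top μ _) (measure_mono hsub)
        _ = F a - F b := by
            rw [hdiff, ENNReal.toReal_sub_of_le
              (measure_mono (preimage_mono (Iic_subset_Iic.mpr hb.le))) (measure_ne_top μ _),
              hFiic, hFiic]
    have hlim : Tendsto (fun b => F a - F b) (𝓝[<] a) (𝓝 0) := by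
      have := (tendsto_const_nhds (x := F a)).sub
        ((hFcont.tendsto a).mono_left (nhdsWithin_le_nhds (s := Set.Iio a)))
      simpa using this
    have hle : (μ (Q ⁻¹' {a})).toReal ≤ 0 :=
      ge_of_tendsto hlim (eventually_nhdsWithin_of_forall fun b hb => key b hb)
    have := le_antisymm hle ENNReal.toReal_nonneg
    rw [ENNReal.toReal_eq_zero_iff] at this
    exact this.resolve_right (measure_ne_top μ _)
  have hIic : μ (Q ⁻¹' Set.Iic a) = ENNReal.ofReal t := by
    rw [← hFa, hFiic]
    exact (ENNReal.ofReal_toReal (measure_ne_top μ _)).symm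
  have hIio : μ (Q ⁻¹' Set.Iio a) = ENNReal.ofReal t := by
    refine le_antisymm ?_ ?_
    · rw [← hIic]; exact measure_mono (preimage_mono Iio_subset_Iic_self)
    · rw [← hIic]
      have hcover : Q ⁻¹' Set.Iic a ⊆ Q ⁻¹' Set.Iio a ∪ Q ⁻¹' {a} := by
        intro ω hω
        rcases lt_or_eq_of_le (show Q ω ≤ a from hω) with h | h
        · exact Or.inl h
        · exact Or.inr h
      calc μ (Q ⁻¹' Set.Iic a) ≤ μ (Q ⁻¹' Set.Iio a ∪ Q ⁻¹' {a}) := measure_mono hcover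
        _ ≤ μ (Q ⁻¹' Set.Iio a) + μ (Q ⁻¹' {a}) := measure_union_le _ _
        _ = μ (Q ⁻¹' Set.Iio a) := by rw [hatom, add_zero]
  have hcompl : Q ⁻¹' Set.Ici a = (Q ⁻¹' Set.Iio a)ᶜ := by
    rw [← preimage_compl, compl_Iio]
  rw [hsetEq, hcompl, measure_compl (hQ measurableSet_Iio) (measure_ne_top μ _),
    measure_univ, hIio, ← ENNReal.ofReal_one, ← ENNReal.ofReal_sub _ ht0.le]

/-- If the conditional mean `f(q) = E[D | Q = q]` is nondecreasing in `q` and the CDF `F`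
of `Q` is continuous, then the TOC is nonnegative and nonincreasing on `(0,1]`, and every
nonnegative-weighted RATE is nonnegative. -/
theorem toc_nonneg_antitone_of_monotone_cond_mean
    {Ω : Type*} [MeasurableSpace Ω]
    (μ : Measure Ω) [IsProbabilityMeasure μ]
    (Q : Ω → ℝ) (D : Ω → ℝ)
    (hQ : Measurable Q) (hD : Integrable D μ)
    (f : ℝ → ℝ) (hf : Monotone f)
    (hcond : μ[D | MeasurableSpace.comap Q inferInstance] =ᵐ[μ] fun ω => f (Q ω))
    (F : ℝ → ℝ) (hF : F = fun q => (μ {ω | Q ω ≤ q}).toReal)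
    (hFcont : Continuous F)
    (TOC : ℝ → ℝ)
    (hTOC : ∀ u, TOC u =
      (∫ ω in {ω | 1 - u ≤ F (Q ω)}, D ω ∂μ) /
        (μ {ω | 1 - u ≤ F (Q ω)}).toReal - ∫ ω, D ω ∂μ) :
    (∀ u ∈ Set.Ioc (0 : ℝ) 1, 0 ≤ TOC u) ∧
      AntitoneOn TOC (Set.Ioc (0 : ℝ) 1) ∧
      ∀ α : ℝ → ℝ, (∀ u, 0 ≤ α u) → IntervalIntegrable α volume 0 1 →
        0 ≤ ∫ u in (0 : ℝ)..1, α u * TOC u := by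
  have hm : MeasurableSpace.comap Q inferInstance ≤ ‹MeasurableSpace Ω› := hQ.comap_le
  have hfQint : Integrable (fun ω => f (Q ω)) μ :=
    (integrable_condExp (m := MeasurableSpace.comap Q inferInstance)).congr hcond
  set A : ℝ → Set Ω := fun u => {ω | 1 - u ≤ F (Q ω)} with hA_def
  have hAeq : ∀ u, A u = Q ⁻¹' (F ⁻¹' Set.Ici (1 - u)) := fun u => rfl
  have hAm : ∀ u, MeasurableSet[MeasurableSpace.comap Q inferInstance] (A u) :=
    fun u => ⟨F ⁻¹' Set.Ici (1 - u), hFcont.measurable measurableSet_Ici, rfl⟩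
  have hAmeas : ∀ u, MeasurableSet (A u) := fun u => hm _ (hAm u)
  set G : ℝ → ℝ := fun u => ∫ ω in A u, f (Q ω) ∂μ with hG_def
  have hDA : ∀ u, ∫ ω in A u, D ω ∂μ = G u := by
    intro u
    show _ = ∫ ω in A u, f (Q ω) ∂μ
    calc ∫ ω in A u, D ω ∂μ = ∫ ω in A u, (μ[D|MeasurableSpace.comap Q inferInstance]) ω ∂μ :=
          (setIntegral_condExp hm hD (hAm u)).symm
      _ = ∫ ω in A u, f (Q ω) ∂μ := MeasureTheory.integral_congr_ae (ae_restrict_of_ae hcond)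
  have hED : ∫ ω, D ω ∂μ = ∫ ω, f (Q ω) ∂μ := by
    rw [← integral_condExp hm (f := D)]
    exact MeasureTheory.integral_congr_ae hcond
  have hmeasA : ∀ u ∈ Set.Ioc (0:ℝ) 1, μ (A u) = ENNReal.ofReal u := by
    intro u hu
    rcases eq_or_lt_of_le hu.2 with h1 | h1
    · have : A u = Set.univ := by
        apply Set.eq_univ_of_forall
        intro ω
        have : (0:ℝ) ≤ F (Q ω) := by rw [hF]; exact ENNReal.toReal_nonneg
        simp only [hA_def, Set.mem_setOf_eq, h1]
        linarith
      rw [this, measure_univ, h1, ENNReal.ofReal_one]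
    · obtain ⟨a, _, _, hma⟩ := toc_level_set μ Q hQ F hF hFcont
        (t := 1 - u) (by linarith) (by linarith [hu.1])
      rw [show A u = {ω | 1 - u ≤ F (Q ω)} from rfl, hma]
      congr 1
      ring
  have hAsub : ∀ u v : ℝ, u ≤ v → A u ⊆ A v := by
    intro u v huv ω hω
    simp only [hA_def, Set.mem_setOf_eq] at hω ⊢
    linarith
  -- core inequality
  have key : ∀ u v : ℝ, u ∈ Set.Ioc (0:ℝ) 1 → v ∈ Set.Ioc (0:ℝ) 1 → u ≤ v →
      u * G v ≤ v * G u := by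
    intro u v hu hv huv
    rcases eq_or_lt_of_le huv with rfl | hlt
    · exact le_rfl
    · have hu1 : u < 1 := lt_of_lt_of_le hlt hv.2
      obtain ⟨a, hFa, hseta, _⟩ := toc_level_set μ Q hQ F hF hFcont
        (t := 1 - u) (by linarith) (by linarith [hu.1])
      have hAu : A u = Q ⁻¹' Set.Ici a := hseta
      set B : Set Ω := A v \ A u with hB_def
      have hBmeas : MeasurableSet B := (hAmeas v).diff (hAmeas u)
      have hμu : (μ (A u)).toReal = u := by rw [hmeasA u hu, ENNReal.toReal_ofReal hu.1.le]
      have hμB : (μ B).toReal = v - u := by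
        rw [hB_def, measure_diff (hAsub u v huv) (hAmeas u).nullMeasurableSet (measure_ne_top μ _),
          hmeasA u hu, hmeasA v hv, ← ENNReal.ofReal_sub _ hu.1.le,
          ENNReal.toReal_ofReal (by linarith)]
      have hintAu : IntegrableOn (fun ω => f (Q ω)) (A u) μ := hfQint.integrableOn
      have hintB : IntegrableOn (fun ω => f (Q ω)) B μ := hfQint.integrableOn
      -- lower bound on A u
      have I1 : f a * u ≤ G u := by
        have : ∫ ω in A u, f a ∂μ ≤ ∫ ω in A u, f (Q ω) ∂μ := by
          refine setIntegral_mono_on (integrable_const _).integrableOn hintAu (hAmeas u) ?_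
          intro ω hω
          rw [hAu] at hω
          exact hf hω
        rwa [setIntegral_const, measureReal_def, hμu, smul_eq_mul, mul_comm] at this
      -- upper bound on B
      have I2 : ∫ ω in B, f (Q ω) ∂μ ≤ f a * (v - u) := by
        have : ∫ ω in B, f (Q ω) ∂μ ≤ ∫ ω in B, f a ∂μ := by
          refine setIntegral_mono_on hintB (integrable_const _).integrableOn hBmeas ?_
          intro ω hω
          have hnot : ω ∉ A u := hω.2
          rw [hAu] at hnot
          exact hf (le_of_not_ge hnot)
        rwa [setIntegral_const, measureReal_def, hμB, smul_eq_mul, mul_comm] at this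
      have hsplit : G v = G u + ∫ ω in B, f (Q ω) ∂μ := by
        show (∫ ω in A v, f (Q ω) ∂μ) = (∫ ω in A u, f (Q ω) ∂μ) + ∫ ω in B, f (Q ω) ∂μ
        have hunion : A u ∪ B = A v := Set.union_diff_cancel (hAsub u v huv)
        rw [← hunion, setIntegral_union disjoint_sdiff_right hBmeas hintAu hintB]
      nlinarith [hu.1, I1, I2, hsplit, sub_nonneg.mpr huv]
  have hG1 : G 1 = ∫ ω, f (Q ω) ∂μ := by
    have : A 1 = Set.univ := by
      apply Set.eq_univ_of_forall
      intro ω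
      have : (0:ℝ) ≤ F (Q ω) := by rw [hF]; exact ENNReal.toReal_nonneg
      simp only [hA_def, Set.mem_setOf_eq]
      linarith
    show (∫ ω in A 1, f (Q ω) ∂μ) = ∫ ω, f (Q ω) ∂μ
    rw [this, Measure.restrict_univ]
  have hTOCeq : ∀ u ∈ Set.Ioc (0:ℝ) 1, TOC u = G u / u - G 1 := by
    intro u hu
    rw [hTOC u, hED, ← hG1]
    have h1 : ∫ ω in {ω | 1 - u ≤ F (Q ω)}, D ω ∂μ = G u := hDA u
    have h2 : (μ {ω | 1 - u ≤ F (Q ω)}).toReal = u := by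
      rw [show ({ω | 1 - u ≤ F (Q ω)} : Set Ω) = A u from rfl, hmeasA u hu,
        ENNReal.toReal_ofReal hu.1.le]
    rw [h1, h2]
  have hone : (1:ℝ) ∈ Set.Ioc (0:ℝ) 1 := ⟨one_pos, le_refl 1⟩
  have hnonneg : ∀ u ∈ Set.Ioc (0:ℝ) 1, 0 ≤ TOC u := by
    intro u hu
    rw [hTOCeq u hu, sub_nonneg, le_div_iff₀ hu.1]
    have := key u 1 hu hone hu.2
    linarith
  refine ⟨hnonneg, ?_, ?_⟩
  · intro u hu v hv huv
    rw [hTOCeq u hu, hTOCeq v hv]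
    have := key u v hu hv huv
    have hdiv : G v / v ≤ G u / u := by
      rw [div_le_div_iff₀ hv.1 hu.1]
      linarith
    linarith
  · intro α hα _
    rw [intervalIntegral.integral_of_le zero_le_one]
    refine setIntegral_nonneg measurableSet_Ioc fun u hu => ?_
    exact mul_nonneg (hα u) (hnonneg u hu)
end

section
/- For every n ≥ 1, Σ_{i=1}^n (H_n − H_i − log(n) + log(i))² ≤ π²/24, where H_k is the k-th harmonic number. In particular (1/n)·Σ_{i=1}^n (H_n − H_i − log(n) + log(i))² → 0 as n → ∞. -/
open Real Finset Filter

lemma log_le_trapezoid {t : ℝ} (ht : 1 ≤ t) : Real.log t ≤ (t - 1/t)/2 := by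
  have key : MonotoneOn (fun x : ℝ => (x - 1/x)/2 - Real.log x) (Set.Ici 1) := by
    apply monotoneOn_of_deriv_nonneg (convex_Ici 1)
    · apply ContinuousOn.sub
      · apply ContinuousOn.div_const
        exact continuousOn_id.sub (continuousOn_const.div continuousOn_id
          (fun x hx => by have : (1:ℝ) ≤ x := hx; positivity))
      · exact Real.continuousOn_log.mono (fun x hx => by
          have : (1:ℝ) ≤ x := hx; simp; positivity)
    · intro x hx
      rw [interior_Ici] at hx
      have hx0 : (0:ℝ) < x := lt_trans one_pos hx
      have h1 : HasDerivAt (fun x : ℝ => (x - 1/x)/2 - Real.log x)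
          ((1 - (-1/x^2))/2 - 1/x) x := by
        have hinv : HasDerivAt (fun x : ℝ => 1/x) (-1/x^2) x := by
          simpa [one_div, neg_div] using (hasDerivAt_inv hx0.ne')
        exact (((hasDerivAt_id x).sub hinv).div_const 2).sub
          (by simpa [one_div] using Real.hasDerivAt_log hx0.ne')
      exact h1.differentiableAt.differentiableWithinAt
    · intro x hx
      rw [interior_Ici] at hx
      have hx0 : (0:ℝ) < x := lt_trans one_pos hx
      have h1 : HasDerivAt (fun x : ℝ => (x - 1/x)/2 - Real.log x)
          ((1 - (-1/x^2))/2 - 1/x) x := by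
        have hinv : HasDerivAt (fun x : ℝ => 1/x) (-1/x^2) x := by
          simpa [one_div, neg_div] using (hasDerivAt_inv hx0.ne')
        exact (((hasDerivAt_id x).sub hinv).div_const 2).sub
          (by simpa [one_div] using Real.hasDerivAt_log hx0.ne')
      rw [h1.deriv]
      have : (1 - (-1/x^2))/2 - 1/x = (x-1)^2/(2*x^2) := by field_simp; ring
      rw [this]; positivity
  have := key (Set.self_mem_Ici) (show t ∈ Set.Ici 1 from ht) ht
  simp only [Real.log_one] at this
  linarith

lemma log_succ_bounds (m : ℕ) (hm : 1 ≤ m) :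
    1/((m:ℝ)+1) ≤ Real.log ((m:ℝ)+1) - Real.log m ∧
    Real.log ((m:ℝ)+1) - Real.log m ≤ 1/(2*(m:ℝ)) + 1/(2*((m:ℝ)+1)) := by
  have hm0 : (0:ℝ) < m := by exact_mod_cast hm
  have hm1 : (0:ℝ) < (m:ℝ)+1 := by linarith
  have hdiff : Real.log ((m:ℝ)+1) - Real.log m = Real.log (((m:ℝ)+1)/m) :=
    (Real.log_div hm1.ne' hm0.ne').symm
  constructor
  · have := Real.log_le_sub_one_of_pos (show (0:ℝ) < (m:ℝ)/((m:ℝ)+1) by positivity)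
    have hlog : Real.log ((m:ℝ)/((m:ℝ)+1)) = Real.log m - Real.log ((m:ℝ)+1) :=
      Real.log_div hm0.ne' hm1.ne'
    rw [hlog] at this
    have hdv : (m:ℝ)/((m:ℝ)+1) - 1 = -(1/((m:ℝ)+1)) := by field_simp; ring
    rw [hdv] at this
    linarith
  · rw [hdiff]
    have ht : (1:ℝ) ≤ ((m:ℝ)+1)/m := by
      rw [le_div_iff₀ hm0]; linarith
    have := log_le_trapezoid ht
    have heq : (((m:ℝ)+1)/m - 1/(((m:ℝ)+1)/m))/2 = 1/(2*(m:ℝ)) + 1/(2*((m:ℝ)+1)) := by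
      field_simp; ring
    rw [heq] at this
    exact this

lemma harmonic_bounds (H : ℕ → ℝ) (hH : ∀ k, H k = ∑ i ∈ Finset.Icc 1 k, (1 : ℝ) / i)
    (i : ℕ) (hi : 1 ≤ i) : ∀ n, i ≤ n →
    -(1/(2*(i:ℝ)) - 1/(2*(n:ℝ))) ≤ H n - H i - Real.log n + Real.log i ∧
    H n - H i - Real.log n + Real.log i ≤ 0 := by
  refine Nat.le_induction ?_ ?_
  · constructor <;> simp
  · intro m hm ih
    have hm1 : 1 ≤ m := hi.trans hm
    have hm0 : (0:ℝ) < m := by exact_mod_cast hm1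
    have hi0 : (0:ℝ) < i := by exact_mod_cast hi
    have hHs : H (m+1) = H m + 1/((m:ℝ)+1) := by
      rw [hH (m+1), hH m, Finset.sum_Icc_succ_top (by omega : 1 ≤ m+1)]
      push_cast; ring
    obtain ⟨hlo, hhi⟩ := log_succ_bounds m hm1
    obtain ⟨ilo, ihi⟩ := ih
    have hcast : ((m+1 : ℕ) : ℝ) = (m:ℝ)+1 := by push_cast; ring
    rw [hcast, hHs]
    have e1 : 1/((m:ℝ)+1) - 1/(2*((m:ℝ)+1)) = 1/(2*((m:ℝ)+1)) := by
      field_simp; ring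
    constructor
    · linarith [ilo, hhi, e1]
    · linarith [ihi, hlo]

/-- With `H_k` the `k`-th harmonic number,
`∑_{i=1}^n (H_n − H_i − log n + log i)² ≤ π²/24` for every `n ≥ 1`; in particular,
the average `(1/n) ∑_{i=1}^n (H_n − H_i − log n + log i)²` tends to 0. -/
theorem harmonic_log_sq_sum_bound
    (H : ℕ → ℝ) (hH : ∀ k, H k = ∑ i ∈ Finset.Icc 1 k, (1 : ℝ) / i) :
    (∀ n : ℕ, 1 ≤ n →
      ∑ i ∈ Finset.Icc 1 n, (H n - H i - Real.log n + Real.log i) ^ 2 ≤ π ^ 2 / 24) ∧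
    Tendsto (fun n : ℕ =>
      (1 / (n : ℝ)) * ∑ i ∈ Finset.Icc 1 n, (H n - H i - Real.log n + Real.log i) ^ 2)
      atTop (nhds 0) := by
  have main : ∀ n : ℕ, 1 ≤ n →
      ∑ i ∈ Finset.Icc 1 n, (H n - H i - Real.log n + Real.log i) ^ 2 ≤ π ^ 2 / 24 := by
    intro n hn
    have hterm : ∀ i ∈ Finset.Icc 1 n,
        (H n - H i - Real.log n + Real.log i) ^ 2 ≤ (1/(2*(i:ℝ)))^2 := by
      intro i hi
      rw [Finset.mem_Icc] at hi
      obtain ⟨hlo, hhi⟩ := harmonic_bounds H hH i hi.1 n hi.2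
      have hi0 : (0:ℝ) < i := by exact_mod_cast hi.1
      have hn0 : (0:ℝ) < n := by exact_mod_cast hn
      apply sq_le_sq'
      · have : (0:ℝ) < 1/(2*(n:ℝ)) := by positivity
        linarith
      · have : (0:ℝ) < 1/(2*(i:ℝ)) := by positivity
        linarith
    calc ∑ i ∈ Finset.Icc 1 n, (H n - H i - Real.log n + Real.log i) ^ 2
        ≤ ∑ i ∈ Finset.Icc 1 n, (1/(2*(i:ℝ)))^2 := Finset.sum_le_sum hterm
      _ = (1/4) * ∑ i ∈ Finset.Icc 1 n, 1/((i:ℝ))^2 := by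
          rw [Finset.mul_sum]; apply Finset.sum_congr rfl; intro i _
          field_simp; ring
      _ ≤ (1/4) * (π^2/6) := by
          gcongr
          exact sum_le_hasSum (Finset.Icc 1 n) (fun i _ => by positivity) hasSum_zeta_two
      _ = π^2/24 := by ring
  refine ⟨main, ?_⟩
  have hnonneg : ∀ n : ℕ, 0 ≤ (1 / (n : ℝ)) *
      ∑ i ∈ Finset.Icc 1 n, (H n - H i - Real.log n + Real.log i) ^ 2 := by
    intro n
    apply mul_nonneg (by positivity)
    exact Finset.sum_nonneg (fun i _ => sq_nonneg _)
  have hbound : ∀ n : ℕ, (1 / (n : ℝ)) *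
      ∑ i ∈ Finset.Icc 1 n, (H n - H i - Real.log n + Real.log i) ^ 2
      ≤ (1 / (n : ℝ)) * (π^2/24) := by
    intro n
    rcases Nat.eq_zero_or_pos n with h | h
    · subst h; simp
    · exact mul_le_mul_of_nonneg_left (main n h) (by positivity)
  have htends : Tendsto (fun n : ℕ => (1 / (n : ℝ)) * (π^2/24)) atTop (nhds 0) := by
    have := tendsto_one_div_atTop_nhds_zero_nat.mul_const (π^2/24)
    simpa using this
  exact squeeze_zero hnonneg hbound htends
end
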